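/- In the proof search algorithm, executing a candidate proof step never introduces a directed cycle: if the proof graph is acyclic, and a candidate step s with premises v_1,...,v_l and conclusion v would only be executed when its tentative score min(scr_step(s), scr(v_1), ..., scr(v_l)) strictly exceeds the current score scr(v), then no executed step can have among its premises a node u of which v is already a predecessor. -/
import Mathlib


/-- A proof graph: a directed acyclic graph with sentence nodes `Sent`
(supporting facts `facts`, intermediates, and the hypothesis `hyp`) and step
nodes `Step`.  Each step node `s` has a nonempty set of premises `prem s`
(inbound edges from sentence nodes) and exactly one conclusion `concl s`
(its unique outbound edge).  Each sentence node has at most one inbound edge,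
recorded by `inb : Sent → Option Step`.  Facts have score `1`; a non-fact
sentence node with no inbound edge has score `0`; a sentence node with inbound
step `s` has score `min(stepScore s, scores of the premises of s)`, where
`stepScore s ∈ [0,1]` is an externally given step score. -/
structure ProofGraph (Sent Step : Type) where
  facts : Set Sent
  hyp : Sent
  prem : Step → Finset Sent
  prem_nonempty : ∀ s, (prem s).Nonempty
  concl : Step → Sent
  inb : Sent → Option Step
  inb_concl : ∀ u s, inb u = some s → concl s = u
  fact_no_inb : ∀ u ∈ facts, inb u = none
  stepScore : Step → ℝ
  stepScore_mem : ∀ s, stepScore s ∈ Set.Icc (0 : ℝ) 1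
  scr : Sent → ℝ
  scr_fact : ∀ u ∈ facts, scr u = 1
  scr_no_inb : ∀ u ∉ facts, inb u = none → scr u = 0
  scr_inb : ∀ u s, inb u = some s →
    scr u = min (stepScore s) ((prem s).inf' (prem_nonempty s) scr)

/-- `G.edge v u`: there is a (two-hop) directed connection from sentence node
`v` to sentence node `u` through a step node, i.e. some step `s` has `v` among
its premises and `u` as its conclusion. -/
def ProofGraph.edge {Sent Step : Type} (G : ProofGraph Sent Step)
    (v u : Sent) : Prop :=
  ∃ s, G.inb u = some s ∧ v ∈ G.prem s

/-- `v` is a predecessor of `u`: there is a directed path from `v` to `u`. -/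
def ProofGraph.pred {Sent Step : Type} (G : ProofGraph Sent Step)
    (v u : Sent) : Prop :=
  Relation.TransGen G.edge v u

/-- The proof graph is acyclic (a DAG). -/
def ProofGraph.Acyclic {Sent Step : Type} (G : ProofGraph Sent Step) : Prop :=
  ∀ u, ¬ G.pred u u

/-- Executing a candidate proof step never introduces a directed cycle: if the
proof graph is acyclic and a candidate step (with premises `prems`, step score
`sscr`, and conclusion `v`) would only be executed when its tentative score
`min(sscr, scores of the premises)` strictly exceeds the current score
`scr v`, then no executed step can have among its premises a node `u` of which
`v` is already a predecessor. -/
theorem stmt_5 {Sent Step : Type} (G : ProofGraph Sent Step)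
    (hacyc : G.Acyclic)
    (prems : Finset Sent) (hne : prems.Nonempty) (sscr : ℝ)
    (hsscr : sscr ∈ Set.Icc (0 : ℝ) 1) (v : Sent)
    (hexec : G.scr v < min sscr (prems.inf' hne G.scr)) :
    ∀ u ∈ prems, ¬ G.pred v u := by
  intro u hu hpred
  have mono : ∀ a b, G.edge a b → G.scr b ≤ G.scr a := by
    rintro a b ⟨s, hs, ha⟩
    rw [G.scr_inb b s hs]
    exact le_trans (min_le_right _ _) (Finset.inf'_le _ ha)
  have hle : G.scr u ≤ G.scr v := by
    clear hu
    induction hpred with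
    | single h => exact mono _ _ h
    | tail _ h ih => exact le_trans (mono _ _ h) ih
  have : prems.inf' hne G.scr ≤ G.scr v :=
    le_trans (Finset.inf'_le _ hu) hle
  linarith [min_le_right sscr (prems.inf' hne G.scr)]
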